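/- For every N ∈ ℕ with N ≥ 2 and every bipartition μ of total size (N−2)/2 (when N is even) and excess (4,0), there exist natural numbers k, k' with k + k' = (N−2)/2 and bipartitions μ' of size k and μ'' of size k', both of excess (2,0), such that μ = μ' + μ''. -/

import Mathlib

/-!
Split every part in half: `μ i = ⌈μ i / 2⌉ + ⌊μ i / 2⌋`. Both halving maps are monotone, fix `0`
and raise by at most `e` when their argument rises by `2 e`, so each half is again a
bipartition, and excess `(4, 0)` of `μ` becomes excess `(2, 0)` of each half. The sizes of the
halves add up to the size of `μ`.
-/

/-- A bipartition: a sequence (indexed from 1; position 0 is unused and set to 0)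
of naturals, eventually zero, with `λ₁ ≥ λ₃ ≥ λ₅ ≥ ⋯` and `λ₂ ≥ λ₄ ≥ λ₆ ≥ ⋯`. -/
def IsBipartition (l : ℕ → ℕ) : Prop :=
  l 0 = 0 ∧ (∀ i, 1 ≤ i → l (i + 2) ≤ l i) ∧ ∃ M, ∀ i, M ≤ i → l i = 0

/-- `λ` has excess `(e, e')`: `λ_i + e ≥ λ_{i+1}` for odd `i` and
`λ_i + e' ≥ λ_{i+1}` for even `i ≥ 2`. -/
def HasExcess (l : ℕ → ℕ) (e e' : ℕ) : Prop :=
  ∀ i, 1 ≤ i → (Odd i → l (i + 1) ≤ l i + e) ∧ (Even i → l (i + 1) ≤ l i + e')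

/-- `|λ| = n`. -/
def BSize (l : ℕ → ℕ) (n : ℕ) : Prop :=
  ∃ M, (∀ i, M ≤ i → l i = 0) ∧ (∑ i ∈ Finset.range M, l i) = n

open Finset

lemma apply_add_two_mul_le {f : ℕ → ℕ} (hf : ∀ a, f (a + 2) ≤ f a + 1) (a e : ℕ) :
    f (a + 2 * e) ≤ f a + e := by
  induction e with
  | zero => simp
  | succ e ih =>
    calc f (a + 2 * (e + 1)) = f (a + 2 * e + 2) := by ring_nf
      _ ≤ f (a + 2 * e) + 1 := hf _
      _ ≤ f a + (e + 1) := by omega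

lemma IsBipartition.comp {l : ℕ → ℕ} (hl : IsBipartition l) {f : ℕ → ℕ} (hf : Monotone f)
    (hf0 : f 0 = 0) : IsBipartition (f ∘ l) := by
  obtain ⟨hl0, hmono, M, hM⟩ := hl
  refine ⟨by simp [hl0, hf0], fun i hi => hf (hmono i hi), M, fun i hi => ?_⟩
  simp [hM i hi, hf0]

lemma HasExcess.comp {l : ℕ → ℕ} {e e' : ℕ} (hl : HasExcess l (2 * e) (2 * e')) {f : ℕ → ℕ}
    (hf : Monotone f) (hf2 : ∀ a, f (a + 2) ≤ f a + 1) : HasExcess (f ∘ l) e e' := by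
  intro i hi
  obtain ⟨hodd, heven⟩ := hl i hi
  exact ⟨fun h => (hf (hodd h)).trans (apply_add_two_mul_le hf2 _ _),
    fun h => (hf (heven h)).trans (apply_add_two_mul_le hf2 _ _)⟩

lemma BSize.exists_add {l l₁ l₂ : ℕ → ℕ} {n : ℕ} (hl : BSize l n)
    (hsplit : ∀ i, l i = l₁ i + l₂ i) :
    ∃ k k' : ℕ, k + k' = n ∧ BSize l₁ k ∧ BSize l₂ k' := by
  obtain ⟨M, hM, rfl⟩ := hl
  have hzero : ∀ i, M ≤ i → l₁ i = 0 ∧ l₂ i = 0 := fun i hi => by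
    have := hsplit i
    have := hM i hi
    omega
  refine ⟨∑ i ∈ range M, l₁ i, ∑ i ∈ range M, l₂ i, ?_, ⟨M, fun i hi => (hzero i hi).1, rfl⟩,
    ⟨M, fun i hi => (hzero i hi).2, rfl⟩⟩
  simp only [hsplit, sum_add_distrib]

theorem excess_four_zero_decompose_with_sizes_general (N : ℕ)
    (μ : ℕ → ℕ) (hμ : IsBipartition μ) (hμe : HasExcess μ 4 0)
    (hμs : BSize μ ((N - 2) / 2)) :
    ∃ k k' : ℕ, k + k' = (N - 2) / 2 ∧
      ∃ μ' μ'' : ℕ → ℕ,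
        IsBipartition μ' ∧ HasExcess μ' 2 0 ∧ BSize μ' k ∧
        IsBipartition μ'' ∧ HasExcess μ'' 2 0 ∧ BSize μ'' k' ∧
        ∀ i, μ i = μ' i + μ'' i := by
  have hceil : Monotone fun a : ℕ => (a + 1) / 2 := fun a b h => by dsimp only; omega
  have hfloor : Monotone fun a : ℕ => a / 2 := fun a b h => by dsimp only; omega
  have hsplit : ∀ i, μ i = ((fun a => (a + 1) / 2) ∘ μ) i + ((fun a => a / 2) ∘ μ) i :=
    fun i => by dsimp only [Function.comp]; omega
  obtain ⟨k, k', hk, hsize, hsize'⟩ := hμs.exists_add hsplit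
  refine ⟨k, k', hk, _, _, hμ.comp hceil rfl, hμe.comp (e := 2) (e' := 0) hceil ?_, hsize,
    hμ.comp hfloor rfl, hμe.comp (e := 2) (e' := 0) hfloor ?_, hsize', hsplit⟩ <;> omega

theorem excess_four_zero_decompose_with_sizes (N : ℕ) (hN : 2 ≤ N) (hEven : Even N)
    (μ : ℕ → ℕ) (hμ : IsBipartition μ) (hμe : HasExcess μ 4 0)
    (hμs : BSize μ ((N - 2) / 2)) :
    ∃ k k' : ℕ, k + k' = (N - 2) / 2 ∧
      ∃ μ' μ'' : ℕ → ℕ,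
        IsBipartition μ' ∧ HasExcess μ' 2 0 ∧ BSize μ' k ∧
        IsBipartition μ'' ∧ HasExcess μ'' 2 0 ∧ BSize μ'' k' ∧
        ∀ i, μ i = μ' i + μ'' i :=
  excess_four_zero_decompose_with_sizes_general N μ hμ hμe hμs
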